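/- arXiv:1903.06145 — 4 statements merged into one kernel-verified Lean document; each statement's English description precedes it below -/
import Mathlib

section
/- Let χ be a primitive Dirichlet character modulo q, α ∈ ℝ with αq ∉ ℤ or gcd(αq, q) > 1 (i.e. χ(αq) = 0 under the convention χ(x) = 0 for x ∉ ℤ). Then the linear twist L(s,χ,α) = Σ_{n≥1} χ(n) e^{-2πi nα} n^{-s} extends to an entire function of s. -/
open Complex Finset

open HurwitzZeta ZMod in
/-- If χ(αq) = 0 (with the convention χ(x) = 0 for x ∉ ℤ, i.e. every integer m with
m = αq satisfies χ(m) = 0), then the linear twist L(s,χ,α) extends to an entire function. -/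
theorem linear_twist_entire (q : ℕ) (hq : 0 < q)
    (χ : DirichletCharacter ℂ q) (hχ : χ.IsPrimitive) (α : ℝ)
    (hzero : ∀ m : ℤ, (m : ℝ) = α * q → χ (m : ZMod q) = 0) :
    ∃ G : ℂ → ℂ, Differentiable ℂ G ∧
      ∀ s : ℂ, 1 < s.re →
        G s = ∑' n : ℕ, χ ((n + 1 : ℕ) : ZMod q) *
          exp (-(2 * Real.pi * I * (n + 1) * α)) * ((n + 1 : ℕ) : ℂ) ^ (-s) := by
  haveI : NeZero q := ⟨hq.ne'⟩
  have hq' : (q : ℝ) ≠ 0 := Nat.cast_ne_zero.mpr hq.ne'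
  set τ : ℂ := gaussSum χ ZMod.stdAddChar with hτ
  set c : ZMod q → ℂ := fun k => (q : ℂ)⁻¹ * (χ⁻¹ (-k) * τ) with hc
  set x : ZMod q → ℝ := fun k => (k.val : ℝ) / q - α with hx
  -- Fourier inversion formula for χ
  have hinv : ∀ j : ZMod q, χ j = ∑ k : ZMod q, c k * ZMod.stdAddChar (k * j) := by
    intro j
    have h0 : (χ : ZMod q → ℂ) j = ZMod.dft.symm (ZMod.dft (χ : ZMod q → ℂ)) j := by
      rw [LinearEquiv.symm_apply_apply]
    rw [show (χ j : ℂ) = (χ : ZMod q → ℂ) j from rfl, h0, ZMod.invDFT_apply, smul_eq_mul,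
      Finset.mul_sum]
    refine Finset.sum_congr rfl fun k _ => ?_
    rw [hχ.fourierTransform_eq_inv_mul_gaussSum, smul_eq_mul, hc]
    ring
  -- if c k ≠ 0 then x k is not an integer
  have hxk : ∀ k : ZMod q, c k ≠ 0 → ((x k : ℝ) : UnitAddCircle) ≠ 0 := by
    intro k hck
    have h1 : χ⁻¹ (-k) ≠ 0 := fun h0 => hck (by simp [hc, h0])
    have h2 : IsUnit (-k) := by
      by_contra h2; exact h1 (MulChar.map_nonunit _ h2)
    have hk : IsUnit k := by simpa using h2.neg
    rw [Ne, AddCircle.coe_eq_zero_iff]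
    rintro ⟨n, hn⟩
    rw [zsmul_eq_mul, mul_one] at hn
    have hm : (((k.val : ℤ) - n * q : ℤ) : ℝ) = α * q := by
      push_cast
      rw [hx] at hn
      field_simp at hn ⊢
      linarith
    have h3 := hzero _ hm
    have h4 : (((k.val : ℤ) - n * q : ℤ) : ZMod q) = k := by
      push_cast [ZMod.natCast_self, ZMod.natCast_val, ZMod.cast_id]
      ring
    rw [h4] at h3
    exact (hk.map χ).ne_zero h3
  refine ⟨fun s => ∑ k : ZMod q, c k * expZeta (x k) s, ?_, ?_⟩
  · apply Differentiable.fun_sum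
    intro k _
    rcases eq_or_ne (c k) 0 with h | h
    · simp only [h, zero_mul]; exact differentiable_const (0 : ℂ)
    · exact (differentiable_expZeta_of_ne_zero (hxk k h)).const_mul _
  · intro s hs
    have hs0 : s ≠ 0 := fun h => by simp [h] at hs; linarith
    have key : ∀ k : ZMod q, HasSum
        (fun n : ℕ => c k * (cexp (2 * Real.pi * I * (x k) * (n + 1)) / ((n : ℂ) + 1) ^ s))
        (c k * expZeta (x k) s) := by
      intro k
      have h1 := (hasSum_expZeta_of_one_lt_re (x k) hs).mul_left (c k)
      set f : ℕ → ℂ := fun n => c k * (cexp (2 * Real.pi * I * (x k) * n) / (n : ℂ) ^ s) with hf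
      have h0 : f 0 = 0 := by simp [hf, zero_cpow hs0]
      have h2 : HasSum (fun n => f (n + 1)) (c k * expZeta (x k) s) := by
        rw [hasSum_nat_add_iff 1]
        simpa [h0] using h1
      refine h2.congr_fun fun n => ?_
      simp [hf]
    have total := hasSum_sum (s := Finset.univ) (fun k _ => key k)
    show (∑ k : ZMod q, c k * expZeta (x k) s) = _
    rw [← total.tsum_eq]
    refine tsum_congr fun n => ?_
    have hm : ∀ k : ZMod q,
        cexp (2 * Real.pi * I * (x k) * ((n : ℂ) + 1)) =
          ZMod.stdAddChar (k * ((n + 1 : ℕ) : ZMod q)) * cexp (-(2 * Real.pi * I * (n + 1) * α)) := by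
      intro k
      have h5 : k * ((n + 1 : ℕ) : ZMod q) = (((k.val * (n + 1) : ℕ) : ℤ) : ZMod q) := by
        push_cast [ZMod.natCast_val, ZMod.cast_id]
        ring
      rw [h5, ZMod.stdAddChar_coe, ← Complex.exp_add]
      congr 1
      rw [hx]
      push_cast
      field_simp
      ring
    rw [hinv (((n + 1 : ℕ) : ZMod q)), Finset.sum_mul, Finset.sum_mul]
    refine Finset.sum_congr rfl fun k _ => ?_
    rw [hm k]
    rw [cpow_neg, div_eq_mul_inv]
    push_cast
    ring
end

section
/- Let χ be a primitive Dirichlet character modulo q and α ∈ ℝ with αq ∈ ℤ. The linear twist L(s,χ,α) = Σ_{n≥1} χ(n) e^{-2πi nα} n^{-s} extends meromorphically with at most a simple pole at s = 1, and its residue there equals χ̄(αq)/τ_{χ̄}. -/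
/-!
Writing α = p/q, the coefficients χ(n) e(-nα) depend only on n mod q: they are the values of
Φ(j) = e(-jp/q) χ(j) on ℤ/qℤ. Hence L(s,χ,α) is the L-function of the periodic function Φ, which
continues to ℂ ∖ {1} with residue (∑ⱼ Φ(j))/q at 1. That sum is the discrete Fourier transform of χ
at p, which for primitive χ is χ̄(-p) τ(χ); Fourier inversion gives τ(χ) τ(χ̄) = χ(-1) q, and the
two combine to χ̄(p)/τ(χ̄).
-/

open Complex Finset Filter Topology ZMod

namespace ZMod

variable {N : ℕ} [NeZero N]

lemma sum_range_natCast {M : Type*} [AddCommMonoid M] (f : ZMod N → M) :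
    ∑ a ∈ range N, f a = ∑ j : ZMod N, f j :=
  (sum_nbij' (fun j : ZMod N ↦ j.val) (fun a ↦ (a : ZMod N))
    (fun j _ ↦ mem_range.mpr j.val_lt) (fun _ _ ↦ mem_univ _) (fun j _ ↦ natCast_zmod_val j)
    (fun _ ha ↦ val_cast_of_lt (mem_range.mp ha)) (fun j _ ↦ by rw [natCast_zmod_val])).symm

lemma stdAddChar_natCast (a : ℕ) : stdAddChar (a : ZMod N) = exp (2 * Real.pi * I * a / N) := by
  exact_mod_cast stdAddChar_coe (a : ℤ)

lemma stdAddChar_neg_natCast_mul_intCast {α : ℝ} {p : ℤ} (hp : (p : ℝ) = α * N) (n : ℕ) :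
    stdAddChar (-((n : ZMod N) * (p : ZMod N))) = exp (-(2 * Real.pi * I * n * α)) := by
  have hα : (α : ℂ) = p / N := by
    rw [eq_div_iff (NeZero.ne _)]
    exact_mod_cast hp.symm
  have hcast : -((n : ZMod N) * (p : ZMod N)) = ((-(n * p) : ℤ) : ZMod N) := by push_cast; ring
  rw [hcast, stdAddChar_coe, hα]
  push_cast
  ring_nf

lemma LFunction_eq_tsum (Φ : ZMod N → ℂ) {s : ℂ} (hs : 1 < s.re) :
    LFunction Φ s = ∑' n : ℕ, Φ (n + 1 : ℕ) * ((n + 1 : ℕ) : ℂ) ^ (-s) := by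
  rw [LFunction_eq_LSeries Φ hs, LSeries, (LSeriesSummable_of_one_lt_re Φ hs).tsum_eq_zero_add,
    LSeries.term_zero, zero_add]
  refine tsum_congr fun n ↦ ?_
  rw [LSeries.term_of_ne_zero n.succ_ne_zero, cpow_neg, div_eq_mul_inv]

end ZMod

namespace DirichletCharacter

variable {N : ℕ} [NeZero N]

lemma gaussSum_stdAddChar_eq_sum_range (ψ : DirichletCharacter ℂ N) :
    gaussSum ψ stdAddChar = ∑ a ∈ range N, ψ a * exp (2 * Real.pi * I * a / N) := by
  simp only [← stdAddChar_natCast, sum_range_natCast fun j ↦ ψ j * stdAddChar j, gaussSum]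

variable {χ : DirichletCharacter ℂ N}

lemma IsPrimitive.gaussSum_mul_gaussSum_inv (hχ : χ.IsPrimitive) :
    gaussSum χ stdAddChar * gaussSum χ⁻¹ stdAddChar = χ (-1) * N := by
  symm
  calc χ (-1) * N = 𝓕 (𝓕 χ) 1 := by rw [dft_dft, mul_comm]; rfl
    _ = ∑ k, χ⁻¹ (-k) * stdAddChar (-k) * gaussSum χ stdAddChar := by
      simp only [dft_apply, hχ.fourierTransform_eq_inv_mul_gaussSum, mul_one, smul_eq_mul]
      exact sum_congr rfl fun k _ ↦ by ring
    _ = ∑ k, χ⁻¹ k * stdAddChar k * gaussSum χ stdAddChar :=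
      Fintype.sum_equiv (Equiv.neg _) _ _ fun k ↦ by simp only [Equiv.neg_apply]
    _ = _ := by rw [← sum_mul, mul_comm]; rfl

lemma IsPrimitive.fourierTransform_div_card (hχ : χ.IsPrimitive) (k : ZMod N) :
    𝓕 χ k / N = χ⁻¹ k / gaussSum χ⁻¹ stdAddChar := by
  have hprod := hχ.gaussSum_mul_gaussSum_inv
  have hunit : χ⁻¹ (-1) * χ (-1) = 1 := by
    rw [← MulChar.mul_apply, inv_mul_cancel, MulChar.one_apply isUnit_one.neg]
  have hgauss : gaussSum χ⁻¹ stdAddChar ≠ 0 := by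
    rintro h
    rw [h, mul_zero, eq_comm, mul_eq_zero] at hprod
    exact hprod.elim (fun h ↦ by simp [h] at hunit) (NeZero.ne _)
  rw [hχ.fourierTransform_eq_inv_mul_gaussSum, ← neg_one_mul k, map_mul, div_eq_div_iff (NeZero.ne _) hgauss]
  linear_combination χ⁻¹ k * χ⁻¹ (-1) * hprod + (N : ℂ) * χ⁻¹ k * hunit

end DirichletCharacter

/-- If αq ∈ ℤ, the linear twist L(s,χ,α) extends meromorphically with at most a simple
pole at s = 1, with residue χ̄(αq)/τ_{χ̄}. -/
theorem linear_twist_residue (q : ℕ) (hq : 0 < q)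
    (χ : DirichletCharacter ℂ q) (hχ : χ.IsPrimitive) (α : ℝ)
    (p : ℤ) (hp : (p : ℝ) = α * q) :
    ∃ G : ℂ → ℂ, DifferentiableOn ℂ G {s : ℂ | s ≠ 1} ∧
      (∀ s : ℂ, 1 < s.re →
        G s = ∑' n : ℕ, χ ((n + 1 : ℕ) : ZMod q) *
          exp (-(2 * Real.pi * I * (n + 1) * α)) * ((n + 1 : ℕ) : ℂ) ^ (-s)) ∧
      Tendsto (fun s : ℂ => (s - 1) * G s) (𝓝[≠] (1 : ℂ))
        (𝓝 ((starRingEnd ℂ) (χ (p : ZMod q)) /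
          ∑ a ∈ range q, (starRingEnd ℂ) (χ (a : ZMod q)) * exp (2 * Real.pi * I * a / q))) := by
  have : NeZero q := ⟨hq.ne'⟩
  set Φ : ZMod q → ℂ := fun j ↦ stdAddChar (-(j * (p : ZMod q))) * χ j
  refine ⟨LFunction Φ, fun s hs ↦ (differentiableAt_LFunction Φ s (.inl hs)).differentiableWithinAt,
    fun s hs ↦ ?_, ?_⟩
  · rw [LFunction_eq_tsum Φ hs]
    refine tsum_congr fun n ↦ ?_
    simp only [Φ]
    rw [stdAddChar_neg_natCast_mul_intCast hp, mul_comm (exp _)]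
    push_cast
    rfl
  · have hsum : ∑ j, Φ j / q = 𝓕 χ p / q := by rw [← sum_div]; rfl
    have hden : ∑ a ∈ range q, (starRingEnd ℂ) (χ a) * exp (2 * Real.pi * I * a / q) =
        gaussSum χ⁻¹ stdAddChar := by
      simp only [starRingEnd_apply, MulChar.star_apply', χ⁻¹.gaussSum_stdAddChar_eq_sum_range]
    rw [hden, starRingEnd_apply, MulChar.star_apply', ← hχ.fourierTransform_div_card, ← hsum]
    exact LFunction_residue_one Φ
end

section
/- Let r_1 ≠ r_2 be positive reals and ρ_1, ρ_2 > 0. On the line ℓ : t + (σ/π)log(r_1/r_2) + (1/π)log(ρ_1 r_2/(ρ_2 r_1)) = 0, for s = σ + it ∈ ℓ and δ > 0 sufficiently small, the function W(s) = ρ_1 e^{iθ_1} e^{iπ(1−s)/2} r_1^{s−1} + ε ρ_2 e^{iθ_2} e^{−iπ(1−s)/2} r_2^{s−1} satisfies |W(σ + i(t+δ))| ≥ c (r_1 r_2)^{(σ−1)/2} (ρ_1 ρ_2)^{1/2} δ for an absolute constant c > 0. -/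
/-!
On the line ℓ the two terms of `W` have equal moduli, so each equals their geometric mean
`M = (r₁ r₂)^{(σ-1)/2} (ρ₁ ρ₂)^{1/2}`. Moving `t` to `t + δ` multiplies the first modulus by
`e^{πδ/2}` and the second by `e^{-πδ/2}`, so by the reverse triangle inequality
`‖W‖ ≥ M (e^{πδ/2} - e^{-πδ/2}) = 2 M sinh (πδ/2) ≥ π M δ`, for every `δ > 0`.
-/

open Complex

noncomputable def W (r₁ r₂ ρ₁ ρ₂ θ₁ θ₂ ε : ℝ) (s : ℂ) : ℂ :=
  (ρ₁ : ℂ) * exp (θ₁ * I) * exp (Real.pi * I * (1 - s) / 2) * exp ((s - 1) * Real.log r₁) +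
    (ε : ℂ) * ((ρ₂ : ℂ) * exp (θ₂ * I)) * exp (-(Real.pi * I * (1 - s) / 2)) *
      exp ((s - 1) * Real.log r₂)

lemma norm_exp_pi_mul_I_one_sub_div_two (s : ℂ) :
    ‖exp (Real.pi * I * (1 - s) / 2)‖ = Real.exp (Real.pi * s.im / 2) := by
  rw [norm_exp]
  congr 1
  simp

lemma norm_exp_sub_one_mul_log {r : ℝ} (hr : 0 < r) (s : ℂ) :
    ‖exp ((s - 1) * Real.log r)‖ = r ^ (s.re - 1) := by
  rw [norm_exp, Real.rpow_def_of_pos hr, mul_comm]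
  simp

lemma sub_le_norm_W {r₁ r₂ ρ₁ ρ₂ ε : ℝ} (hr₁ : 0 < r₁) (hr₂ : 0 < r₂) (hρ₁ : 0 ≤ ρ₁)
    (hρ₂ : 0 ≤ ρ₂) (hε : |ε| = 1) (θ₁ θ₂ σ τ : ℝ) :
    ρ₁ * r₁ ^ (σ - 1) * Real.exp (Real.pi * τ / 2) -
        ρ₂ * r₂ ^ (σ - 1) * Real.exp (-(Real.pi * τ / 2)) ≤
      ‖W r₁ r₂ ρ₁ ρ₂ θ₁ θ₂ ε (σ + τ * I)‖ := by
  have hre : (σ + τ * I : ℂ).re = σ := by simp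
  have him : (σ + τ * I : ℂ).im = τ := by simp
  refine le_of_eq_of_le ?_ (norm_sub_le_norm_add _ _)
  simp only [hre, him, norm_mul, norm_exp_ofReal_mul_I, norm_exp_pi_mul_I_one_sub_div_two,
    Complex.exp_neg, norm_inv, norm_exp_sub_one_mul_log hr₁, norm_exp_sub_one_mul_log hr₂,
    norm_real, Real.norm_eq_abs, abs_of_nonneg hρ₁, abs_of_nonneg hρ₂, hε, Real.exp_neg]
  ring

lemma modulus_balance_of_line {r₁ r₂ ρ₁ ρ₂ σ t : ℝ} (hr₁ : 0 < r₁) (hr₂ : 0 < r₂)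
    (hρ₁ : 0 < ρ₁) (hρ₂ : 0 < ρ₂)
    (hline : t + σ / Real.pi * Real.log (r₁ / r₂) +
      1 / Real.pi * Real.log (ρ₁ * r₂ / (ρ₂ * r₁)) = 0) :
    ρ₁ * r₁ ^ (σ - 1) * Real.exp (Real.pi * t / 2) =
      ρ₂ * r₂ ^ (σ - 1) * Real.exp (-(Real.pi * t / 2)) := by
  rw [Real.log_div hr₁.ne' hr₂.ne', Real.log_div (by positivity) (by positivity),
    Real.log_mul hρ₁.ne' hr₂.ne', Real.log_mul hρ₂.ne' hr₁.ne'] at hline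
  field_simp at hline
  rw [Real.rpow_def_of_pos hr₁, Real.rpow_def_of_pos hr₂, ← Real.exp_log hρ₁,
    ← Real.exp_log hρ₂, ← Real.exp_add, ← Real.exp_add, ← Real.exp_add, ← Real.exp_add]
  congr 1
  linarith

lemma modulus_eq_geom_mean_of_balance {r₁ r₂ ρ₁ ρ₂ σ t : ℝ} (hr₁ : 0 < r₁) (hr₂ : 0 < r₂)
    (hρ₁ : 0 < ρ₁) (hρ₂ : 0 < ρ₂)
    (hbal : ρ₁ * r₁ ^ (σ - 1) * Real.exp (Real.pi * t / 2) =
      ρ₂ * r₂ ^ (σ - 1) * Real.exp (-(Real.pi * t / 2))) :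
    ρ₁ * r₁ ^ (σ - 1) * Real.exp (Real.pi * t / 2) =
      (r₁ * r₂) ^ ((σ - 1) / 2) * (ρ₁ * ρ₂) ^ ((1 : ℝ) / 2) := by
  refine (mul_self_inj (by positivity) (by positivity)).1 ?_
  calc _ = ρ₁ * r₁ ^ (σ - 1) * Real.exp (Real.pi * t / 2) *
        (ρ₂ * r₂ ^ (σ - 1) * Real.exp (-(Real.pi * t / 2))) := by rw [← hbal]
    _ = (r₁ * r₂) ^ (σ - 1) * (ρ₁ * ρ₂) := by
      rw [Real.mul_rpow hr₁.le hr₂.le, Real.exp_neg]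
      field_simp
    _ = _ := by
      rw [mul_mul_mul_comm, ← Real.rpow_add (by positivity), ← Real.rpow_add (by positivity)]
      norm_num

lemma two_mul_le_exp_sub_exp_neg {x : ℝ} (hx : 0 ≤ x) : 2 * x ≤ Real.exp x - Real.exp (-x) := by
  have := Real.self_le_sinh_iff.2 hx
  rw [Real.sinh_eq] at this
  linarith

theorem W_lower_bound_off_line_general (r₁ r₂ ρ₁ ρ₂ θ₁ θ₂ : ℝ)
    (hr₁ : 0 < r₁) (hr₂ : 0 < r₂) (hρ₁ : 0 < ρ₁) (hρ₂ : 0 < ρ₂)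
    (ε : ℝ) (hε : ε = 1 ∨ ε = -1) :
    ∃ c : ℝ, 0 < c ∧ ∃ δ₀ : ℝ, 0 < δ₀ ∧ ∀ σ t δ : ℝ,
      (t + σ / Real.pi * Real.log (r₁ / r₂) +
        1 / Real.pi * Real.log (ρ₁ * r₂ / (ρ₂ * r₁)) = 0) →
      0 < δ → δ < δ₀ →
      c * (r₁ * r₂) ^ ((σ - 1) / 2) * (ρ₁ * ρ₂) ^ ((1 : ℝ) / 2) * δ ≤
        ‖((ρ₁ : ℂ) * exp (θ₁ * I) * exp (Real.pi * I * (1 - (σ + (t + δ) * I)) / 2) *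
              exp (((σ + (t + δ) * I) - 1) * Real.log r₁) +
            (ε : ℂ) * ((ρ₂ : ℂ) * exp (θ₂ * I)) *
              exp (-(Real.pi * I * (1 - (σ + (t + δ) * I)) / 2)) *
              exp (((σ + (t + δ) * I) - 1) * Real.log r₂))‖ := by
  refine ⟨Real.pi, Real.pi_pos, 1, one_pos, fun σ t δ hline hδ _ => ?_⟩
  have hε₁ : |ε| = 1 := by rcases hε with rfl | rfl <;> norm_num
  have hbal := modulus_balance_of_line hr₁ hr₂ hρ₁ hρ₂ hline
  have ha := modulus_eq_geom_mean_of_balance hr₁ hr₂ hρ₁ hρ₂ hbal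
  have hb := hbal.symm.trans ha
  rw [mul_assoc Real.pi]
  set M := (r₁ * r₂) ^ ((σ - 1) / 2) * (ρ₁ * ρ₂) ^ ((1 : ℝ) / 2)
  calc Real.pi * M * δ = M * (2 * (Real.pi * δ / 2)) := by ring
    _ ≤ M * (Real.exp (Real.pi * δ / 2) - Real.exp (-(Real.pi * δ / 2))) := by
      gcongr
      exact two_mul_le_exp_sub_exp_neg (by positivity)
    _ = ρ₁ * r₁ ^ (σ - 1) * Real.exp (Real.pi * (t + δ) / 2) -
          ρ₂ * r₂ ^ (σ - 1) * Real.exp (-(Real.pi * (t + δ) / 2)) := by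
      rw [mul_add, add_div, neg_add, Real.exp_add, Real.exp_add]
      linear_combination Real.exp (-(Real.pi * δ / 2)) * hb - Real.exp (Real.pi * δ / 2) * ha
    _ ≤ ‖W r₁ r₂ ρ₁ ρ₂ θ₁ θ₂ ε (σ + (t + δ : ℝ) * I)‖ :=
      sub_le_norm_W hr₁ hr₂ hρ₁.le hρ₂.le hε₁ θ₁ θ₂ σ (t + δ)
    _ = _ := by rw [W, ofReal_add]

/-- On the line ℓ where the moduli of the two terms of W agree, shifting the imaginary
part by a small δ > 0 gives the lower bound |W(σ+i(t+δ))| ≥ c (r₁r₂)^{(σ−1)/2}(ρ₁ρ₂)^{1/2} δ. -/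
theorem W_lower_bound_off_line (r₁ r₂ ρ₁ ρ₂ θ₁ θ₂ : ℝ)
    (hr₁ : 0 < r₁) (hr₂ : 0 < r₂) (hr : r₁ ≠ r₂) (hρ₁ : 0 < ρ₁) (hρ₂ : 0 < ρ₂)
    (ε : ℝ) (hε : ε = 1 ∨ ε = -1) :
    ∃ c : ℝ, 0 < c ∧ ∃ δ₀ : ℝ, 0 < δ₀ ∧ ∀ σ t δ : ℝ,
      (t + σ / Real.pi * Real.log (r₁ / r₂) +
        1 / Real.pi * Real.log (ρ₁ * r₂ / (ρ₂ * r₁)) = 0) →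
      0 < δ → δ < δ₀ →
      c * (r₁ * r₂) ^ ((σ - 1) / 2) * (ρ₁ * ρ₂) ^ ((1 : ℝ) / 2) * δ ≤
        ‖((ρ₁ : ℂ) * exp (θ₁ * I) * exp (Real.pi * I * (1 - (σ + (t + δ) * I)) / 2) *
              exp (((σ + (t + δ) * I) - 1) * Real.log r₁) +
            (ε : ℂ) * ((ρ₂ : ℂ) * exp (θ₂ * I)) *
              exp (-(Real.pi * I * (1 - (σ + (t + δ) * I)) / 2)) *
              exp (((σ + (t + δ) * I) - 1) * Real.log r₂))‖ :=
  W_lower_bound_off_line_general r₁ r₂ ρ₁ ρ₂ θ₁ θ₂ hr₁ hr₂ hρ₁ hρ₂ ε hε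
end

section
/- Let G(s) = e^{iπ(1−s)/2} F_1(s) + ε e^{−iπ(1−s)/2} F_2(s) where F_1, F_2 are holomorphic in a half-plane Re(s) < σ_0 with polynomial growth in |Im(s)| on vertical strips, ε ∈ {±1}, and suppose F_1 has a zero ρ with Im(ρ) > 0 and F_1 is almost periodic in the sense that for every δ, ε' > 0 the set of τ ∈ ℝ with max_{|s|=δ} |F_1(s+ρ+iτ) − F_1(s+ρ)| < ε' is relatively dense. Then G has zeros with real part arbitrarily close to Re(ρ): for every small δ > 0 there exists τ > 0 such that G has a zero in the disc of center ρ + iτ and radius δ. -/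
/-!
Put `H(z) = F₁(z) + ε e^{-iπ(1-z)} F₂(z)`, so that the function of the theorem is
`e^{iπ(1-z)/2} H(z)`. Since `|e^{-iπ(1-z)}| = e^{-π Im z}`, the second summand of `H` is
exponentially small high up in a vertical strip, while an almost period `τ` makes `F₁(· + iτ)`
uniformly close to `F₁` on a small circle around the isolated zero `ρ`. Hence `H(· + iτ)` is a
small perturbation of `F₁` on that circle, and a Rouché-type argument (maximum modulus for the
difference, minimum modulus for `H(· + iτ)`) produces a zero of `H` near `ρ + iτ`.
-/

open Complex Metric Filter Set Topology
open scoped Real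

theorem norm_le_of_forall_mem_sphere_norm_le {E : Type*} [NormedAddCommGroup E]
    [NormedSpace ℂ E] {f : ℂ → E} {c : ℂ} {δ M : ℝ} (hδ : 0 < δ)
    (hf : DifferentiableOn ℂ f (closedBall c δ)) (hM : ∀ z ∈ sphere c δ, ‖f z‖ ≤ M) :
    ‖f c‖ ≤ M :=
  Complex.norm_le_of_forall_mem_frontier_norm_le isBounded_ball
    (hf.diffContOnCl_ball subset_rfl) (by rwa [frontier_ball c hδ.ne'])
    (subset_closure (mem_ball_self hδ))

theorem exists_mem_ball_eq_zero_of_norm_lt {f : ℂ → ℂ} {c : ℂ} {δ m : ℝ} (hδ : 0 < δ)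
    (hf : DifferentiableOn ℂ f (closedBall c δ)) (hm : ∀ z ∈ sphere c δ, m ≤ ‖f z‖)
    (hc : ‖f c‖ < m) : ∃ z ∈ ball c δ, f z = 0 := by
  by_contra! hball
  have hne : ∀ z ∈ closedBall c δ, f z ≠ 0 := by
    intro z hz hz0
    rcases (mem_closedBall.1 hz).lt_or_eq with hlt | heq
    · exact hball z (mem_ball.2 hlt) hz0
    · have := hm z (mem_sphere.2 heq)
      rw [hz0, norm_zero] at this
      linarith [norm_nonneg (f c)]
  have hfc : 0 < ‖f c‖ := norm_pos_iff.2 (hne c (mem_closedBall_self hδ.le))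
  have hinv : ‖(f c)⁻¹‖ ≤ m⁻¹ :=
    norm_le_of_forall_mem_sphere_norm_le (f := fun z => (f z)⁻¹) hδ (hf.inv hne) fun z hz => by
      rw [norm_inv]
      exact inv_anti₀ (hfc.trans hc) (hm z hz)
  rw [norm_inv, inv_le_inv₀ hfc (hfc.trans hc)] at hinv
  linarith

theorem exists_mem_ball_eq_zero_of_norm_sub_le {f g : ℂ → ℂ} {c : ℂ} {δ γ η : ℝ} (hδ : 0 < δ)
    (hf : DifferentiableOn ℂ f (closedBall c δ)) (hg : DifferentiableOn ℂ g (closedBall c δ))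
    (hfc : f c = 0) (hγ : ∀ z ∈ sphere c δ, γ ≤ ‖f z‖) (hη : 2 * η < γ)
    (hfg : ∀ z ∈ sphere c δ, ‖g z - f z‖ ≤ η) : ∃ z ∈ ball c δ, g z = 0 := by
  have hgc : ‖g c‖ ≤ η := by
    simpa [hfc] using norm_le_of_forall_mem_sphere_norm_le hδ (hg.sub hf) hfg
  refine exists_mem_ball_eq_zero_of_norm_lt hδ hg (m := γ - η) (fun z hz => ?_) (by linarith)
  linarith [hγ z hz, hfg z hz, norm_sub_norm_le (f z) (g z), norm_sub_rev (f z) (g z)]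

theorem exists_mem_ball_add_eq_zero_of_norm_sub_le {f g : ℂ → ℂ} {c w : ℂ} {δ γ η : ℝ}
    (hδ : 0 < δ) (hf : DifferentiableOn ℂ f (closedBall c δ))
    (hg : DifferentiableOn ℂ g (closedBall (c + w) δ)) (hfc : f c = 0)
    (hγ : ∀ z ∈ sphere c δ, γ ≤ ‖f z‖) (hη : 2 * η < γ)
    (hfg : ∀ z ∈ sphere c δ, ‖g (z + w) - f z‖ ≤ η) : ∃ z ∈ ball (c + w) δ, g z = 0 := by
  obtain ⟨z, hz, hgz⟩ := exists_mem_ball_eq_zero_of_norm_sub_le (g := fun z => g (z + w)) hδ hf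
    (hg.comp (by fun_prop) fun z hz => by simpa using hz) hfc hγ hη hfg
  exact ⟨z + w, by simpa using hz, hgz⟩

theorem AnalyticOnNhd.exists_forall_mem_sphere_le_norm {F : ℂ → ℂ} {U : Set ℂ} {ρ : ℂ}
    (hF : AnalyticOnNhd ℂ F U) (hU : IsPreconnected U) (hρ : ρ ∈ U) (hne : ¬ EqOn F 0 U) :
    ∃ r > 0, ∀ δ, 0 < δ → δ < r → ∃ γ > 0, ∀ z ∈ sphere ρ δ, γ ≤ ‖F z‖ := by
  have hnz : ∀ᶠ z in 𝓝[≠] ρ, F z ≠ 0 :=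
    (hF ρ hρ).eventually_eq_zero_or_eventually_ne_zero.resolve_left
      fun h => hne (hF.eqOn_zero_of_preconnected_of_eventuallyEq_zero hU hρ h)
  obtain ⟨r, hr, hball⟩ := Metric.eventually_nhds_iff.1
    ((eventually_nhdsWithin_iff.1 hnz).and (hF ρ hρ).eventually_analyticAt)
  refine ⟨r, hr, fun δ hδ hδr => ?_⟩
  have hsub : sphere ρ δ ⊆ ball ρ r := sphere_subset_ball hδr
  exact (isCompact_sphere ρ δ).exists_forall_le' (f := fun z => ‖F z‖)
    (fun z hz => (hball (hsub hz)).2.continuousAt.norm.continuousWithinAt)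
    (fun z hz => norm_pos_iff.2 ((hball (hsub hz)).1 (ne_of_mem_sphere hz hδ.ne')))

theorem eventually_forall_norm_mul_exp_mul_le {S : Set ℂ} {F : ℂ → ℂ} {A C η : ℝ} (c : ℂ)
    (hη : 0 < η) (hF : ∀ s ∈ S, 1 ≤ |s.im| → ‖F s‖ ≤ C * |s.im| ^ A) :
    ∀ᶠ T in atTop, ∀ s ∈ S, T ≤ s.im → ‖c * exp (-(π * I * (1 - s))) * F s‖ ≤ η := by
  have hdecay : Tendsto (fun t : ℝ => ‖c‖ * C * (t ^ A * Real.exp (-π * t))) atTop (𝓝 0) := by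
    simpa using (tendsto_rpow_mul_exp_neg_mul_atTop_nhds_zero A π Real.pi_pos).const_mul
      (‖c‖ * C)
  filter_upwards [eventually_forall_ge_atTop.2
    ((hdecay.eventually_le_const hη).and (eventually_ge_atTop 1))] with T hT s hs hsT
  obtain ⟨hle, h1⟩ := hT s.im hsT
  have habs : |s.im| = s.im := abs_of_pos (by linarith)
  have hexp : ‖exp (-(π * I * (1 - s)))‖ = Real.exp (-π * s.im) := by
    rw [Complex.norm_exp]
    congr 1
    simp
  calc ‖c * exp (-(π * I * (1 - s))) * F s‖
      = ‖c‖ * Real.exp (-π * s.im) * ‖F s‖ := by rw [norm_mul, norm_mul, hexp]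
    _ ≤ ‖c‖ * Real.exp (-π * s.im) * (C * s.im ^ A) := by
        gcongr
        simpa [habs] using hF s hs (by rw [habs]; exact h1)
    _ = ‖c‖ * C * (s.im ^ A * Real.exp (-π * s.im)) := by ring
    _ ≤ η := hle

theorem re_add_mul_I_mem_Icc_of_mem_closedBall {z ρ : ℂ} {δ : ℝ} (t : ℝ)
    (hz : z ∈ closedBall ρ δ) : (z + t * I).re ∈ Icc (ρ.re - δ) (ρ.re + δ) := by
  have h := abs_le.1 ((abs_re_le_norm (z - ρ)).trans (mem_closedBall_iff_norm.1 hz))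
  simp only [sub_re] at h
  simp only [add_re, mul_re, ofReal_re, I_re, ofReal_im, I_im, mem_Icc]
  constructor <;> linarith

theorem sub_add_le_im_add_mul_I_of_mem_closedBall {z ρ : ℂ} {δ : ℝ} (t : ℝ)
    (hz : z ∈ closedBall ρ δ) : ρ.im - δ + t ≤ (z + t * I).im := by
  have h := abs_le.1 ((abs_im_le_norm (z - ρ)).trans (mem_closedBall_iff_norm.1 hz))
  simp only [sub_im] at h
  simp only [add_im, mul_im, ofReal_re, I_im, ofReal_im, I_re]
  linarith

theorem eventually_forall_mem_closedBall_norm_mul_exp_mul_le {F : ℂ → ℂ} {ρ : ℂ}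
    {δ A C η : ℝ} (c : ℂ) (hη : 0 < η)
    (hF : ∀ s : ℂ, ρ.re - δ ≤ s.re → s.re ≤ ρ.re + δ → 1 ≤ |s.im| → ‖F s‖ ≤ C * |s.im| ^ A) :
    ∀ᶠ τ : ℝ in atTop, ∀ z ∈ closedBall ρ δ,
      ‖c * exp (-(π * I * (1 - (z + τ * I)))) * F (z + τ * I)‖ ≤ η := by
  have hstrip := eventually_forall_norm_mul_exp_mul_le (S := re ⁻¹' Icc (ρ.re - δ) (ρ.re + δ))
    c hη fun s hs => hF s hs.1 hs.2
  filter_upwards [(tendsto_atTop_add_const_left atTop (ρ.im - δ) tendsto_id).eventually hstrip]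
    with τ hτ z hz
  exact hτ _ (re_add_mul_I_mem_Icc_of_mem_closedBall τ hz)
    (sub_add_le_im_add_mul_I_of_mem_closedBall τ hz)

theorem exp_half_mul_add_exp_neg_half_mul (w a b c : ℂ) :
    exp (w / 2) * a + c * exp (-(w / 2)) * b = exp (w / 2) * (a + c * exp (-w) * b) := by
  have h : exp (w / 2) * exp (-w) = exp (-(w / 2)) := by
    rw [← Complex.exp_add]
    ring_nf
  linear_combination (-(c * b)) * h

theorem zeros_from_almost_periodicity_general (σ₀ : ℝ) (F₁ F₂ : ℂ → ℂ) (ε : ℝ)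
    (h₁ : DifferentiableOn ℂ F₁ {s : ℂ | s.re < σ₀})
    (h₂ : DifferentiableOn ℂ F₂ {s : ℂ | s.re < σ₀})
    (hgrow : ∀ a b : ℝ, b < σ₀ → ∃ A C : ℝ, 0 < C ∧ ∀ s : ℂ,
      a ≤ s.re → s.re ≤ b → 1 ≤ |s.im| →
        ‖F₁ s‖ ≤ C * |s.im| ^ A ∧ ‖F₂ s‖ ≤ C * |s.im| ^ A)
    (ρ : ℂ) (hρdom : ρ.re < σ₀) (hρ : F₁ ρ = 0)
    (hne : ¬ ∀ z : ℂ, z.re < σ₀ → F₁ z = 0)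
    (hAP : ∀ δ ε' : ℝ, 0 < δ → 0 < ε' → ∃ L : ℝ, 0 < L ∧ ∀ x : ℝ, ∃ τ : ℝ,
      x ≤ τ ∧ τ ≤ x + L ∧ ∀ s : ℂ, ‖s‖ = δ →
        ‖F₁ (s + ρ + τ * I) - F₁ (s + ρ)‖ < ε') :
    ∃ δ₀ : ℝ, 0 < δ₀ ∧ ∀ δ : ℝ, 0 < δ → δ < δ₀ → ∃ τ : ℝ, 0 < τ ∧ ∃ z : ℂ,
      ‖z - (ρ + τ * I)‖ < δ ∧
      exp (Real.pi * I * (1 - z) / 2) * F₁ z +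
        (ε : ℂ) * exp (-(Real.pi * I * (1 - z) / 2)) * F₂ z = 0 := by
  set U : Set ℂ := {s : ℂ | s.re < σ₀}
  have hU : IsOpen U := isOpen_lt continuous_re continuous_const
  obtain ⟨r, hr, hsphere⟩ := (h₁.analyticOnNhd hU).exists_forall_mem_sphere_le_norm
    (convex_halfSpace_re_lt σ₀).isPreconnected hρdom fun h => hne fun z hz => h hz
  refine ⟨min r (σ₀ - ρ.re), lt_min hr (by linarith), fun δ hδ hδ₀ => ?_⟩
  obtain ⟨γ, hγ, hγF⟩ := hsphere δ hδ (hδ₀.trans_le (min_le_left _ _))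
  have hδσ : ρ.re + δ < σ₀ := by linarith [hδ₀.trans_le (min_le_right _ _)]
  have hdom : ∀ t : ℝ, ∀ z ∈ closedBall ρ δ, z + t * I ∈ U := fun t z hz =>
    (re_add_mul_I_mem_Icc_of_mem_closedBall t hz).2.trans_lt hδσ
  obtain ⟨A, C, -, hAC⟩ := hgrow (ρ.re - δ) (ρ.re + δ) hδσ
  obtain ⟨T, hT⟩ := eventually_atTop.1 ((eventually_gt_atTop 0).and
    (eventually_forall_mem_closedBall_norm_mul_exp_mul_le (ε : ℂ) (by positivity : 0 < γ / 5)
      fun s h₁ h₂ h₃ => (hAC s h₁ h₂ h₃).2))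
  obtain ⟨L, -, hL⟩ := hAP δ (γ / 5) hδ (by positivity)
  obtain ⟨τ, hTτ, -, hτF⟩ := hL T
  obtain ⟨hτ, htail⟩ := hT τ hTτ
  set E : ℂ → ℂ := fun z => ε * exp (-(π * I * (1 - z))) * F₂ z
  have hH : DifferentiableOn ℂ (fun z => F₁ z + E z) U := by
    have : DifferentiableOn ℂ (fun z : ℂ => (ε : ℂ) * exp (-(π * I * (1 - z)))) U := by fun_prop
    exact h₁.add (this.mul h₂)
  have hclose : ∀ z ∈ sphere ρ δ, ‖F₁ (z + τ * I) + E (z + τ * I) - F₁ z‖ ≤ 2 * γ / 5 := by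
    intro z hz
    have hshift : ‖F₁ (z + τ * I) - F₁ z‖ < γ / 5 := by
      simpa using hτF (z - ρ) (mem_sphere_iff_norm.1 hz)
    rw [add_sub_right_comm]
    linarith [norm_add_le (F₁ (z + τ * I) - F₁ z) (E (z + τ * I)),
      htail z (sphere_subset_closedBall hz)]
  obtain ⟨z, hz, hHz⟩ := exists_mem_ball_add_eq_zero_of_norm_sub_le hδ
    (h₁.mono fun z hz => by simpa using hdom 0 z hz)
    (hH.mono fun w hw => by simpa using hdom τ (w - τ * I) (by simpa using hw))
    hρ hγF (by linarith) hclose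
  refine ⟨τ, hτ, z, mem_ball_iff_norm.1 hz, ?_⟩
  rw [exp_half_mul_add_exp_neg_half_mul]
  exact mul_eq_zero_of_right _ hHz

/-- Almost periodicity pushes zeros of F₁ to zeros of
G(s) = e^{iπ(1−s)/2} F₁(s) + ε e^{−iπ(1−s)/2} F₂(s): if F₁, F₂ are holomorphic with
polynomial growth on a half-plane, F₁ is not identically zero, F₁(ρ) = 0 with Im ρ > 0
and F₁ is almost periodic, then G has zeros in every small disc around some ρ + iτ, τ > 0. -/
theorem zeros_from_almost_periodicity (σ₀ : ℝ) (F₁ F₂ : ℂ → ℂ) (ε : ℝ)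
    (hε : ε = 1 ∨ ε = -1)
    (h₁ : DifferentiableOn ℂ F₁ {s : ℂ | s.re < σ₀})
    (h₂ : DifferentiableOn ℂ F₂ {s : ℂ | s.re < σ₀})
    (hgrow : ∀ a b : ℝ, b < σ₀ → ∃ A C : ℝ, 0 < C ∧ ∀ s : ℂ,
      a ≤ s.re → s.re ≤ b → 1 ≤ |s.im| →
        ‖F₁ s‖ ≤ C * |s.im| ^ A ∧ ‖F₂ s‖ ≤ C * |s.im| ^ A)
    (ρ : ℂ) (hρdom : ρ.re < σ₀) (hρim : 0 < ρ.im) (hρ : F₁ ρ = 0)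
    (hne : ¬ ∀ z : ℂ, z.re < σ₀ → F₁ z = 0)
    (hAP : ∀ δ ε' : ℝ, 0 < δ → 0 < ε' → ∃ L : ℝ, 0 < L ∧ ∀ x : ℝ, ∃ τ : ℝ,
      x ≤ τ ∧ τ ≤ x + L ∧ ∀ s : ℂ, ‖s‖ = δ →
        ‖F₁ (s + ρ + τ * I) - F₁ (s + ρ)‖ < ε') :
    ∃ δ₀ : ℝ, 0 < δ₀ ∧ ∀ δ : ℝ, 0 < δ → δ < δ₀ → ∃ τ : ℝ, 0 < τ ∧ ∃ z : ℂ,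
      ‖z - (ρ + τ * I)‖ < δ ∧
      exp (Real.pi * I * (1 - z) / 2) * F₁ z +
        (ε : ℂ) * exp (-(Real.pi * I * (1 - z) / 2)) * F₂ z = 0 :=
  zeros_from_almost_periodicity_general σ₀ F₁ F₂ ε h₁ h₂ hgrow ρ hρdom hρ hne hAP
end
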